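/- Let T* be a real-valued random variable and X a random variable with values in a measurable space E, both on a probability space (Ω, 𝓕, P), and let C be a real-valued random variable independent of the pair (T*, X). Let t ∈ ℝ, define h(u) = P(C ≥ u), and assume there is c > 0 with h(u) ≥ c for all u ≤ t. Set W = 1{T* ≤ C} · 1{T* ≤ t} / h(T*) and F = E[ 1{T* ≤ t} | σ(X) ]. Then for every bounded measurable function μ : E → ℝ, E[ (W − μ(X))² ] = E[ (F − μ(X))² ] + A(t), where A(t) = E[ 1{T* ≤ t} / h(T*) ] − E[ F² ]. Moreover A(t) ≥ 0 and A(t) does not depend on μ. -/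

import Mathlib

/-!
Write `w(u) = 1{u ≤ t} / h(u)`, so that `W = 1{T ≤ C} w(T)`. Integrating out the independent
censoring time `C` replaces `1{T ≤ C}` by `h(T)`, hence `E[W g(T, X)] = E[1{T ≤ t} g(T, X)]`
for every bounded `g`. With `g = μ(X)` and conditioning on `X` this gives
`E[W μ(X)] = E[F μ(X)]`, so after expanding both squares the cross terms agree and the two mean
squared errors differ by `E[W²] − E[F²]`; with `g = w(T)` it gives `E[W²] = E[1{T ≤ t} / h(T)]`.
Finally `0 ≤ F ≤ 1` and `h ≤ 1` give `E[F²] ≤ E[F] = P(T ≤ t) ≤ E[1{T ≤ t} / h(T)]`.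
-/

open MeasureTheory ProbabilityTheory

section L2

variable {Ω : Type*} [MeasurableSpace Ω] {P : Measure Ω}

theorem integral_sub_sq {f g : Ω → ℝ} (hf : MemLp f 2 P) (hg : MemLp g 2 P) :
    ∫ ω, (f ω - g ω) ^ 2 ∂P
      = ∫ ω, f ω ^ 2 ∂P - 2 * ∫ ω, f ω * g ω ∂P + ∫ ω, g ω ^ 2 ∂P := by
  have hfg : Integrable (fun ω => f ω * g ω) P := hf.integrable_mul hg
  simp only [sub_sq, mul_assoc]
  rw [integral_add (f := fun ω => f ω ^ 2 - 2 * (f ω * g ω))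
      (hf.integrable_sq.sub (hfg.const_mul 2)) hg.integrable_sq,
    integral_sub hf.integrable_sq (hfg.const_mul 2), integral_const_mul]

theorem integral_sub_sq_eq_add_of_integral_mul_eq {W F G : Ω → ℝ} (hW : MemLp W 2 P)
    (hF : MemLp F 2 P) (hG : MemLp G 2 P)
    (hWG : ∫ ω, W ω * G ω ∂P = ∫ ω, F ω * G ω ∂P) :
    ∫ ω, (W ω - G ω) ^ 2 ∂P
      = ∫ ω, (F ω - G ω) ^ 2 ∂P + (∫ ω, W ω ^ 2 ∂P - ∫ ω, F ω ^ 2 ∂P) := by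
  rw [integral_sub_sq hW hG, integral_sub_sq hF hG, hWG]
  ring

end L2

section CondExp

variable {Ω : Type*} {m mΩ : MeasurableSpace Ω} {P : Measure Ω}

theorem integral_mul_eq_integral_condExp_mul (hm : m ≤ mΩ) [SigmaFinite (P.trim hm)]
    {f g : Ω → ℝ} (hg : StronglyMeasurable[m] g) (hf : Integrable f P)
    (hfg : Integrable (fun ω => f ω * g ω) P) :
    ∫ ω, f ω * g ω ∂P = ∫ ω, P[f | m] ω * g ω ∂P := by
  rw [← integral_condExp hm]
  exact integral_congr_ae (condExp_mul_of_stronglyMeasurable_right hg hfg hf)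

theorem condExp_mem_Icc_zero_one (hm : m ≤ mΩ) [IsFiniteMeasure P] {f : Ω → ℝ}
    (hf : Integrable f P) (hf01 : ∀ᵐ ω ∂P, f ω ∈ Set.Icc 0 1) :
    ∀ᵐ ω ∂P, P[f | m] ω ∈ Set.Icc 0 1 := by
  have hnonneg : 0 ≤ᵐ[P] P[f | m] := condExp_nonneg (hf01.mono fun _ h => h.1)
  have hle : P[f | m] ≤ᵐ[P] P[fun _ => (1 : ℝ) | m] :=
    condExp_mono hf (integrable_const 1) (hf01.mono fun _ h => h.2)
  rw [condExp_const hm] at hle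
  filter_upwards [hnonneg, hle] with ω h0 h1 using ⟨h0, h1⟩

/-- `E[f|m]² ≤ E[f|m]` pointwise, because `0 ≤ E[f|m] ≤ 1`. -/
theorem integral_condExp_sq_le_integral (hm : m ≤ mΩ) [IsFiniteMeasure P] {f : Ω → ℝ}
    (hf : Integrable f P) (hf01 : ∀ᵐ ω ∂P, f ω ∈ Set.Icc 0 1) :
    ∫ ω, P[f | m] ω ^ 2 ∂P ≤ ∫ ω, f ω ∂P := by
  have h01 := condExp_mem_Icc_zero_one hm hf hf01
  have hsq : MemLp (P[f | m]) 2 P :=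
    memLp_of_bounded h01 integrable_condExp.aestronglyMeasurable 2
  rw [← integral_condExp hm (f := f)]
  refine integral_mono_ae hsq.integrable_sq integrable_condExp ?_
  filter_upwards [h01] with ω hω
  nlinarith [hω.1, hω.2]

end CondExp

section Survival

variable {Ω : Type*} [MeasurableSpace Ω]

noncomputable def survivalFun (P : Measure Ω) (C : Ω → ℝ) (u : ℝ) : ℝ :=
  P.real {ω | u ≤ C ω}

variable (P : Measure Ω) (C : Ω → ℝ)

theorem survivalFun_nonneg (u : ℝ) : 0 ≤ survivalFun P C u := measureReal_nonneg

theorem survivalFun_le_one [IsProbabilityMeasure P] (u : ℝ) : survivalFun P C u ≤ 1 :=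
  measureReal_le_one

theorem antitone_survivalFun [IsFiniteMeasure P] : Antitone (survivalFun P C) :=
  fun _ _ huv => measureReal_mono fun _ hω => huv.trans hω

theorem measurable_survivalFun [IsFiniteMeasure P] : Measurable (survivalFun P C) :=
  (antitone_survivalFun P C).measurable

end Survival

section Weight

variable {Ω : Type*} [MeasurableSpace Ω] (P : Measure Ω) (C : Ω → ℝ) (t : ℝ)

noncomputable def ipcwWeight (u : ℝ) : ℝ :=
  (if u ≤ t then 1 else 0) / survivalFun P C u

theorem measurable_ipcwWeight [IsFiniteMeasure P] : Measurable (ipcwWeight P C t) :=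
  (Measurable.ite measurableSet_Iic measurable_const measurable_const).div
    (measurable_survivalFun P C)

variable {P C t}

theorem abs_ipcwWeight_le {c : ℝ} (hc : 0 < c) (hcS : ∀ u ≤ t, c ≤ survivalFun P C u) (u : ℝ) :
    |ipcwWeight P C t u| ≤ c⁻¹ := by
  unfold ipcwWeight
  split_ifs with hu
  · rw [abs_of_nonneg (div_nonneg zero_le_one (survivalFun_nonneg P C u)), one_div]
    exact inv_anti₀ hc (hcS u hu)
  · simp [hc.le]

theorem survivalFun_mul_ipcwWeight (hS : ∀ u ≤ t, 0 < survivalFun P C u) (u : ℝ) :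
    survivalFun P C u * ipcwWeight P C t u = if u ≤ t then 1 else 0 := by
  unfold ipcwWeight
  split_ifs with hu
  · exact mul_one_div_cancel (hS u hu).ne'
  · simp

theorem ite_mul_ipcwWeight (u : ℝ) :
    (if u ≤ t then 1 else 0) * ipcwWeight P C t u = ipcwWeight P C t u := by
  unfold ipcwWeight
  split_ifs <;> simp

theorem ite_le_ipcwWeight [IsProbabilityMeasure P] (hS : ∀ u ≤ t, 0 < survivalFun P C u)
    (u : ℝ) : (if u ≤ t then 1 else 0) ≤ ipcwWeight P C t u := by
  unfold ipcwWeight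
  split_ifs with hu
  · exact one_le_one_div (hS u hu) (survivalFun_le_one P C u)
  · simp

theorem integral_ite_le_le_integral_ipcwWeight [IsProbabilityMeasure P]
    {T : Ω → ℝ} (hT : Measurable T) {c : ℝ} (hc : 0 < c)
    (hcS : ∀ u ≤ t, c ≤ survivalFun P C u) :
    ∫ ω, (if T ω ≤ t then (1 : ℝ) else 0) ∂P ≤ ∫ ω, ipcwWeight P C t (T ω) ∂P := by
  refine integral_mono ?_ ?_ fun ω => ite_le_ipcwWeight (fun u hu => hc.trans_le (hcS u hu)) (T ω)
  · exact .of_bound (Measurable.ite (measurableSet_le hT measurable_const) measurable_const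
      measurable_const).aestronglyMeasurable 1 (ae_of_all _ fun ω => by split_ifs <;> simp)
  · exact .of_bound ((measurable_ipcwWeight P C t).comp hT).aestronglyMeasurable c⁻¹
      (ae_of_all _ fun ω => abs_ipcwWeight_le hc hcS (T ω))

end Weight

section Censoring

variable {Ω β : Type*} [MeasurableSpace Ω] [MeasurableSpace β] {P : Measure Ω}
  [IsProbabilityMeasure P] {C : Ω → ℝ} {Y : Ω → β} {τ : β → ℝ} {t c : ℝ}

/-- Fubini over the product law of `(C, Y)`, integrating out `C` first. -/
theorem integral_ite_le_mul_eq_integral_survivalFun_mul (hC : Measurable C) (hY : Measurable Y)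
    (hCY : IndepFun C Y P) (hτ : Measurable τ) {g : β → ℝ} (hg : Integrable g (P.map Y)) :
    ∫ ω, (if τ (Y ω) ≤ C ω then (1 : ℝ) else 0) * g (Y ω) ∂P
      = ∫ ω, survivalFun P C (τ (Y ω)) * g (Y ω) ∂P := by
  have hmap : P.map (fun ω => (C ω, Y ω)) = (P.map C).prod (P.map Y) :=
    (indepFun_iff_map_prod_eq_prod_map_map hC.aemeasurable hY.aemeasurable).mp hCY
  have := Measure.isProbabilityMeasure_map (μ := P) hC.aemeasurable
  set Φ : ℝ × β → ℝ := fun z => (if τ z.2 ≤ z.1 then (1 : ℝ) else 0) * g z.2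
  have hΦ : Integrable Φ ((P.map C).prod (P.map Y)) := by
    refine (hg.comp_snd (P.map C)).bdd_mul (c := 1) ?_ (ae_of_all _ fun z => ?_)
    · exact (Measurable.ite (measurableSet_le (hτ.comp measurable_snd) measurable_fst)
        measurable_const measurable_const).aestronglyMeasurable
    · split_ifs <;> simp
  have hinner : ∀ y, ∫ x, Φ (x, y) ∂(P.map C) = survivalFun P C (τ y) * g y := by
    intro y
    simp only [Φ, integral_mul_const]
    change _ = P.real (C ⁻¹' Set.Ici (τ y)) * g y
    rw [← map_measureReal_apply hC measurableSet_Ici,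
      ← integral_indicator_one measurableSet_Ici]
    simp only [Set.indicator_apply, Set.mem_Ici, Pi.one_apply]
  calc ∫ ω, (if τ (Y ω) ≤ C ω then (1 : ℝ) else 0) * g (Y ω) ∂P
      = ∫ z, Φ z ∂((P.map C).prod (P.map Y)) := by
        rw [← hmap, integral_map (hC.prodMk hY).aemeasurable (hmap ▸ hΦ.1)]
    _ = ∫ y, survivalFun P C (τ y) * g y ∂(P.map Y) := by
        simp only [integral_prod_symm Φ hΦ, hinner]
    _ = ∫ ω, survivalFun P C (τ (Y ω)) * g (Y ω) ∂P :=
        integral_map hY.aemeasurable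
          (((measurable_survivalFun P C).comp hτ).aestronglyMeasurable.mul hg.1)

theorem integral_ite_le_mul_ipcwWeight_mul (hC : Measurable C) (hY : Measurable Y)
    (hCY : IndepFun C Y P) (hτ : Measurable τ) (hc : 0 < c) (hcS : ∀ u ≤ t, c ≤ survivalFun P C u)
    {g : β → ℝ} (hg : Integrable g (P.map Y)) :
    ∫ ω, (if τ (Y ω) ≤ C ω then (1 : ℝ) else 0) * ipcwWeight P C t (τ (Y ω)) * g (Y ω) ∂P
      = ∫ ω, (if τ (Y ω) ≤ t then (1 : ℝ) else 0) * g (Y ω) ∂P := by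
  have hwg : Integrable (fun y => ipcwWeight P C t (τ y) * g y) (P.map Y) :=
    hg.bdd_mul (c := c⁻¹) ((measurable_ipcwWeight P C t).comp hτ).aestronglyMeasurable
      (ae_of_all _ fun y => abs_ipcwWeight_le hc hcS (τ y))
  simp only [mul_assoc]
  rw [integral_ite_le_mul_eq_integral_survivalFun_mul hC hY hCY hτ hwg]
  simp only [← mul_assoc, survivalFun_mul_ipcwWeight fun u hu => hc.trans_le (hcS u hu)]

theorem memLp_ite_le_mul_ipcwWeight (hC : Measurable C) (hY : Measurable Y) (hτ : Measurable τ)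
    (hc : 0 < c) (hcS : ∀ u ≤ t, c ≤ survivalFun P C u) :
    MemLp (fun ω => (if τ (Y ω) ≤ C ω then 1 else 0) * ipcwWeight P C t (τ (Y ω))) 2 P := by
  refine MemLp.of_bound ?_ c⁻¹ (ae_of_all _ fun ω => ?_)
  · exact ((Measurable.ite (measurableSet_le (hτ.comp hY) hC) measurable_const
      measurable_const).mul ((measurable_ipcwWeight P C t).comp (hτ.comp hY))).aestronglyMeasurable
  · have := abs_ipcwWeight_le hc hcS (τ (Y ω))
    split_ifs <;> simp [this, hc.le]

theorem integral_ite_le_mul_ipcwWeight_sq (hC : Measurable C) (hY : Measurable Y)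
    (hCY : IndepFun C Y P) (hτ : Measurable τ) (hc : 0 < c)
    (hcS : ∀ u ≤ t, c ≤ survivalFun P C u) :
    ∫ ω, ((if τ (Y ω) ≤ C ω then 1 else 0) * ipcwWeight P C t (τ (Y ω))) ^ 2 ∂P
      = ∫ ω, ipcwWeight P C t (τ (Y ω)) ∂P := by
  have hw : Integrable (fun y => ipcwWeight P C t (τ y)) (P.map Y) :=
    .of_bound ((measurable_ipcwWeight P C t).comp hτ).aestronglyMeasurable c⁻¹
      (ae_of_all _ fun y => abs_ipcwWeight_le hc hcS (τ y))
  calc _ = ∫ ω, (if τ (Y ω) ≤ C ω then 1 else 0) * ipcwWeight P C t (τ (Y ω))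
        * ipcwWeight P C t (τ (Y ω)) ∂P := by
        congr with ω; split_ifs <;> ring
    _ = ∫ ω, (if τ (Y ω) ≤ t then 1 else 0) * ipcwWeight P C t (τ (Y ω)) ∂P :=
        integral_ite_le_mul_ipcwWeight_mul hC hY hCY hτ hc hcS hw
    _ = _ := by simp only [ite_mul_ipcwWeight]

end Censoring

theorem ite_le_mem_Icc (a b : ℝ) : (if a ≤ b then (1 : ℝ) else 0) ∈ Set.Icc 0 1 := by
  split_ifs <;> simp



/-- Proposition 1 of the paper in the single-event setting, with explicit inseparability term:
with `W = 1{T* ≤ C} · 1{T* ≤ t} / h(T*)` and `F = E[1{T* ≤ t} | σ(X)]`, for every bounded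
measurable model `μ`, `E[(W − μ(X))²] = E[(F − μ(X))²] + A(t)` where
`A(t) = E[1{T* ≤ t}/h(T*)] − E[F²] ≥ 0` does not depend on `μ`. -/
theorem stmt_7 {Ω : Type*} [mΩ : MeasurableSpace Ω] (P : Measure Ω) [IsProbabilityMeasure P]
    {E : Type*} [mE : MeasurableSpace E]
    (T : Ω → ℝ) (X : Ω → E) (C : Ω → ℝ)
    (hT : Measurable T) (hX : Measurable X) (hC : Measurable C)
    (hTXC : ProbabilityTheory.IndepFun C (fun ω => (T ω, X ω)) P)
    (t : ℝ) (h : ℝ → ℝ) (hh : ∀ u, h u = (P {ω | u ≤ C ω}).toReal)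
    (c : ℝ) (hc : 0 < c) (hcbd : ∀ u ≤ t, c ≤ h u)
    (W : Ω → ℝ)
    (hW : ∀ ω, W ω = (if T ω ≤ C ω then (1 : ℝ) else 0) * (if T ω ≤ t then (1 : ℝ) else 0)
      / h (T ω))
    (F : Ω → ℝ)
    (hF : F = P[fun ω => (if T ω ≤ t then (1 : ℝ) else 0) | MeasurableSpace.comap X mE])
    (μ : E → ℝ) (hμ : Measurable μ) (Cμ : ℝ) (hμbd : ∀ x, |μ x| ≤ Cμ) :
    (∫ ω, (W ω - μ (X ω)) ^ 2 ∂P)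
      = (∫ ω, (F ω - μ (X ω)) ^ 2 ∂P)
        + ((∫ ω, (if T ω ≤ t then (1 : ℝ) else 0) / h (T ω) ∂P) - ∫ ω, (F ω) ^ 2 ∂P) ∧
    0 ≤ (∫ ω, (if T ω ≤ t then (1 : ℝ) else 0) / h (T ω) ∂P) - ∫ ω, (F ω) ^ 2 ∂P := by
  obtain rfl : h = survivalFun P C := funext hh
  obtain rfl : W = (fun ω => (if T ω ≤ C ω then 1 else 0) * ipcwWeight P C t (T ω)) :=
    funext fun ω => (hW ω).trans (mul_div_assoc _ _ _)
  have hY : Measurable fun ω => (T ω, X ω) := hT.prodMk hX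
  have hI : MemLp (fun ω => if T ω ≤ t then (1 : ℝ) else 0) 2 P :=
    memLp_of_bounded (ae_of_all _ fun ω => ite_le_mem_Icc (T ω) t)
      (Measurable.ite (measurableSet_le hT measurable_const) measurable_const
        measurable_const).aestronglyMeasurable 2
  have hμX : MemLp (fun ω => μ (X ω)) 2 P :=
    .of_bound (hμ.comp hX).aestronglyMeasurable Cμ (ae_of_all _ fun ω => hμbd (X ω))
  have hWμ : ∫ ω, (if T ω ≤ C ω then 1 else 0) * ipcwWeight P C t (T ω) * μ (X ω) ∂P
      = ∫ ω, F ω * μ (X ω) ∂P := by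
    refine (integral_ite_le_mul_ipcwWeight_mul hC hY hTXC measurable_fst hc hcbd
      (g := fun p => μ p.2) (.of_bound (hμ.comp measurable_snd).aestronglyMeasurable Cμ
        (ae_of_all _ fun p => hμbd p.2))).trans ?_
    rw [hF]
    exact integral_mul_eq_integral_condExp_mul hX.comap_le
      (hμ.comp (comap_measurable X)).stronglyMeasurable (hI.integrable one_le_two)
      (hI.integrable_mul hμX)
  refine ⟨?_, ?_⟩
  · rw [integral_sub_sq_eq_add_of_integral_mul_eq
      (memLp_ite_le_mul_ipcwWeight hC hY measurable_fst hc hcbd)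
      (hF ▸ hI.condExp one_le_two) hμX hWμ,
      integral_ite_le_mul_ipcwWeight_sq hC hY hTXC measurable_fst hc hcbd]
    rfl
  · rw [hF, sub_nonneg]
    exact (integral_condExp_sq_le_integral hX.comap_le (hI.integrable one_le_two)
      (ae_of_all _ fun ω => ite_le_mem_Icc (T ω) t)).trans
      (integral_ite_le_le_integral_ipcwWeight hT hc hcbd)
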